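/- arXiv:1108.1972 — 2 statements merged into one kernel-verified Lean document; each statement's English description precedes it below -/
import Mathlib

section
/- Let X = (X₁,…,X_d) be a random vector whose joint distribution function F is a MEV distribution with unit Fréchet marginals, and let I₁, I₂ be disjoint non-empty subsets of {1,…,d}. Then for all x, y > 0, y ε_{I₂} · Λ_U^{(I₁|I₂)}(x,y) = x ε_{I₁} · Λ_U^{(I₂|I₁)}(y,x) = x ε_{I₁} + y ε_{I₂} − l^{(I₁,I₂)}(x^{-1}, y^{-1}), where Λ_U^{(I₁|I₂)}(x,y) = lim_{t→∞} P( M(I₁) > 1 − x/t | M(I₂) > 1 − y/t ). -/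
/-!
Max-stability passes to every sub-vector, so `G(a, b) = P(X_{I₁} ≤ a, X_{I₂} ≤ b)` satisfies
`G(s a, s b) ^ s = G(a, b)`. Hence `ℓ(p, q) = l^{(I₁,I₂)}(p⁻¹, q⁻¹) = -log G(p⁻¹, q⁻¹)` is
positively homogeneous and monotone, and therefore continuous. By the Fréchet marginals,
`M(I) ≤ 1 - z/t` iff `X_I ≤ 1/p_t` with `p_t = -log (1 - z/t) ~ z/t`, so every exceedance
probability has the form `1 - exp (-ℓ(p_t, q_t)) ~ ℓ(t p_t, t q_t) / t ~ ℓ(x, y) / t`; the case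
`I₂ = ∅` gives `P(M(I) > 1 - z/t) ~ z ε_I / t`. Inclusion–exclusion for the joint exceedance
and division give both conditional limits.
-/

open MeasureTheory Filter Finset

/-- The joint distribution function of the random vector `X` under `μ`. -/
noncomputable def jointCDF {Ω : Type*} [MeasurableSpace Ω] (μ : Measure Ω) {d : ℕ}
    (X : Fin d → Ω → ℝ) (x : Fin d → ℝ) : ℝ :=
  (μ {ω | ∀ i, X i ω ≤ x i}).toReal

/-- The marginal distribution function of the `i`-th coordinate of `X` under `μ`. -/
noncomputable def margCDF {Ω : Type*} [MeasurableSpace Ω] (μ : Measure Ω) {d : ℕ}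
    (X : Fin d → Ω → ℝ) (i : Fin d) (u : ℝ) : ℝ :=
  (μ {ω | X i ω ≤ u}).toReal

/-- `l^{(I₁,I₂)}(x,y) = -log F(a₁,…,a_d)` where `aᵢ = x` on `I₁`, `aᵢ = y` on `I₂` and
`aᵢ = ∞` otherwise (taking the limit of `F` in those arguments, i.e. dropping the
corresponding constraints). -/
noncomputable def mevL {Ω : Type*} [MeasurableSpace Ω] (μ : Measure Ω) {d : ℕ}
    (X : Fin d → Ω → ℝ) (I₁ I₂ : Finset (Fin d)) (x y : ℝ) : ℝ :=
  -Real.log (μ {ω | (∀ i ∈ I₁, X i ω ≤ x) ∧ (∀ j ∈ I₂, X j ω ≤ y)}).toReal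

/-- The extremal coefficient `ε_I = l^{(I,∅)}(1,1)` of the sub-vector `X_I`. -/
noncomputable def extCoef {Ω : Type*} [MeasurableSpace Ω] (μ : Measure Ω) {d : ℕ}
    (X : Fin d → Ω → ℝ) (I : Finset (Fin d)) : ℝ :=
  mevL μ X I ∅ 1 1

/-- `M(I) = max_{i ∈ I} F_i(X_i)`. -/
noncomputable def Msub {Ω : Type*} [MeasurableSpace Ω] (μ : Measure Ω) {d : ℕ}
    (X : Fin d → Ω → ℝ) (I : Finset (Fin d)) (hI : I.Nonempty) (ω : Ω) : ℝ :=
  I.sup' hI fun i => margCDF μ X i (X i ω)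

/-- The stable tail dependence function `l(x₁,…,x_d) = -log F(x₁,…,x_d)`. -/
noncomputable def stdf {Ω : Type*} [MeasurableSpace Ω] (μ : Measure Ω) {d : ℕ}
    (X : Fin d → Ω → ℝ) (x : Fin d → ℝ) : ℝ :=
  -Real.log (jointCDF μ X x)

/-- `X` has a multivariate extreme value (max-stable) distribution with unit Fréchet
marginals under the probability measure `μ`. -/
structure IsMEVFrechet {Ω : Type*} [MeasurableSpace Ω] (μ : Measure Ω) {d : ℕ}
    (X : Fin d → Ω → ℝ) : Prop where
  meas : ∀ i, Measurable (X i)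
  frechet : ∀ i, ∀ u : ℝ, 0 < u → margCDF μ X i u = Real.exp (-u⁻¹)
  maxStable : ∀ t : ℝ, 0 < t → ∀ x : Fin d → ℝ, (∀ i, 0 < x i) →
    jointCDF μ X (fun i => t * x i) ^ t = jointCDF μ X x

open Topology Asymptotics

theorem tendsto_mul_comp_of_hasDerivAt {f : ℝ → ℝ} {f' : ℝ} (hf : HasDerivAt f f' 0)
    (hf0 : f 0 = 0) {c : ℝ → ℝ} {A : ℝ} (hc : Tendsto (fun t => t * c t) atTop (𝓝 A)) :
    Tendsto (fun t => t * f (c t)) atTop (𝓝 (f' * A)) := by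
  have hc0 : Tendsto c atTop (𝓝 0) := by
    have := tendsto_inv_atTop_zero.mul hc
    rw [zero_mul] at this
    refine this.congr' ?_
    filter_upwards [eventually_ne_atTop 0] with t ht
    rw [inv_mul_cancel_left₀ ht]
  have hlin : (fun h => f h - f' * h) =o[𝓝 0] fun h => h := by
    simpa [hf0, mul_comm] using hf.isLittleO
  have herr : Tendsto (fun t => t * (f (c t) - f' * c t)) atTop (𝓝 0) :=
    (isLittleO_one_iff ℝ).1 <|
      ((isBigO_refl (fun t : ℝ => t) atTop).mul_isLittleO (hlin.comp_tendsto hc0)).trans_isBigO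
        (hc.isBigO_one ℝ)
  simpa [mul_sub, mul_left_comm] using herr.add (hc.const_mul f')

theorem tendsto_mul_neg_log_one_sub_div (z : ℝ) :
    Tendsto (fun t => t * -Real.log (1 - z / t)) atTop (𝓝 z) := by
  simpa [neg_div, ← sub_eq_add_neg] using (Real.tendsto_mul_log_one_add_div_atTop (-z)).neg

theorem one_sub_div_mem_Ioo {z t : ℝ} (hz : 0 < z) (hzt : z < t) : 1 - z / t ∈ Set.Ioo 0 1 := by
  have ht : 0 < t := hz.trans hzt
  constructor
  · linarith [(div_lt_one ht).2 hzt]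
  · linarith [div_pos hz ht]

theorem tendsto_div_of_tendsto_mul {f g : ℝ → ℝ} {a b : ℝ}
    (hf : Tendsto (fun t => t * f t) atTop (𝓝 a)) (hg : Tendsto (fun t => t * g t) atTop (𝓝 b))
    (hb : b ≠ 0) : Tendsto (fun t => f t / g t) atTop (𝓝 (a / b)) := by
  refine (hf.div hg hb).congr' ?_
  filter_upwards [eventually_ne_atTop 0] with t ht
  exact mul_div_mul_left _ _ ht

theorem continuousAt_of_monotone_of_homogeneous {g : ℝ → ℝ → ℝ}
    (hmono : ∀ ⦃p q p' q'⦄, 0 < p → 0 < q → p ≤ p' → q ≤ q' → g p q ≤ g p' q')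
    (hhom : ∀ ⦃s p q⦄, 0 < s → 0 < p → 0 < q → g (s * p) (s * q) = s * g p q)
    {x y : ℝ} (hx : 0 < x) (hy : 0 < y) :
    ContinuousAt (fun z : ℝ × ℝ => g z.1 z.2) (x, y) := by
  have hmin : Continuous fun z : ℝ × ℝ => min (z.1 / x) (z.2 / y) := by fun_prop
  have hmax : Continuous fun z : ℝ × ℝ => max (z.1 / x) (z.2 / y) := by fun_prop
  have hlow := (hmin.tendsto (x, y)).mul_const (g x y)
  have hup := (hmax.tendsto (x, y)).mul_const (g x y)
  simp only [div_self hx.ne', div_self hy.ne', min_self, max_self, one_mul] at hlow hup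
  have hpos : ∀ᶠ z : ℝ × ℝ in 𝓝 (x, y), 0 < z.1 ∧ 0 < z.2 :=
    (continuousAt_const.eventually_lt continuousAt_fst hx).and
      (continuousAt_const.eventually_lt continuousAt_snd hy)
  refine tendsto_of_tendsto_of_tendsto_of_le_of_le' hlow hup ?_ ?_
  all_goals filter_upwards [hpos] with z ⟨hz₁, hz₂⟩
  · have hm : 0 < min (z.1 / x) (z.2 / y) := lt_min (div_pos hz₁ hx) (div_pos hz₂ hy)
    rw [← hhom hm hx hy]
    exact hmono (mul_pos hm hx) (mul_pos hm hy)
      ((le_div_iff₀ hx).1 (min_le_left _ _)) ((le_div_iff₀ hy).1 (min_le_right _ _))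
  · have hM : 0 < max (z.1 / x) (z.2 / y) := lt_max_of_lt_left (div_pos hz₁ hx)
    rw [← hhom hM hx hy]
    exact hmono hz₁ hz₂ ((div_le_iff₀ hx).1 (le_max_left _ _))
      ((div_le_iff₀ hy).1 (le_max_right _ _))

section MEV

variable {Ω : Type*} {d : ℕ} {X : Fin d → Ω → ℝ}

theorem setOf_forall_le_and_forall_le {I₁ I₂ : Finset (Fin d)} (hdisj : Disjoint I₁ I₂)
    (a b : ℝ) :
    {ω | (∀ i ∈ I₁, X i ω ≤ a) ∧ ∀ j ∈ I₂, X j ω ≤ b}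
      = {ω | ∀ i ∈ I₁ ∪ I₂, X i ω ≤ if i ∈ I₁ then a else b} := by
  ext ω
  simp only [Set.mem_ofPred_eq, Finset.mem_union, or_imp, forall_and]
  exact and_congr (forall₂_congr fun i hi => by rw [if_pos hi])
    (forall₂_congr fun j hj => by rw [if_neg (Finset.disjoint_right.1 hdisj hj)])

variable [MeasurableSpace Ω] {μ : Measure Ω}

theorem measurableSet_forall_mem_le (hX : ∀ i, Measurable (X i)) (J : Finset (Fin d))
    (c : Fin d → ℝ) : MeasurableSet {ω | ∀ i ∈ J, X i ω ≤ c i} := by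
  simp only [Set.ofPred_forall]
  exact .iInter fun i => .iInter fun _ => measurableSet_le (hX i) measurable_const

theorem measurable_Msub [IsFiniteMeasure μ] (hX : ∀ i, Measurable (X i)) {I : Finset (Fin d)}
    (hI : I.Nonempty) : Measurable (Msub μ X I hI) := by
  have hF : ∀ i, Monotone (margCDF μ X i) := fun i u v huv =>
    measureReal_mono fun ω hω => le_trans hω huv
  have := Finset.measurable_sup' hI fun i _ => (hF i).measurable.comp (hX i)
  convert this using 1
  ext ω
  simp [Msub, Finset.sup'_apply]

theorem tendsto_measure_forall_le_of_monotone {J : Finset (Fin d)} {c : Fin d → ℝ}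
    {b : ℕ → Fin d → ℝ} (hb : Monotone b) (hbJ : ∀ n, ∀ i ∈ J, b n i = c i)
    (hb_top : ∀ i ∉ J, Tendsto (fun n => b n i) atTop atTop) :
    Tendsto (fun n => μ {ω | ∀ i, X i ω ≤ b n i}) atTop
      (𝓝 (μ {ω | ∀ i ∈ J, X i ω ≤ c i})) := by
  have hunion : (⋃ n, {ω | ∀ i, X i ω ≤ b n i}) = {ω | ∀ i ∈ J, X i ω ≤ c i} := by
    ext ω
    simp only [Set.mem_iUnion, Set.mem_ofPred_eq]
    refine ⟨fun ⟨n, hn⟩ i hi => hbJ n i hi ▸ hn i, fun h => ?_⟩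
    suffices ∀ᶠ n in atTop, ∀ i, X i ω ≤ b n i from this.exists
    refine eventually_all.2 fun i => ?_
    by_cases hi : i ∈ J
    · exact .of_forall fun n => (hbJ n i hi).symm ▸ h i hi
    · exact (hb_top i hi).eventually_ge_atTop (X i ω)
  rw [← hunion]
  exact tendsto_measure_iUnion_atTop fun m n hmn ω hω i => (hω i).trans (hb hmn i)

namespace IsMEVFrechet

variable {I I₁ I₂ : Finset (Fin d)}

theorem measureReal_forall_le_mul_rpow [IsFiniteMeasure μ] (hX : IsMEVFrechet μ X)
    {J : Finset (Fin d)} {c : Fin d → ℝ} (hc : ∀ i ∈ J, 0 < c i) {t : ℝ} (ht : 0 < t) :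
    μ.real {ω | ∀ i ∈ J, X i ω ≤ t * c i} ^ t = μ.real {ω | ∀ i ∈ J, X i ω ≤ c i} := by
  -- `maxStable` constrains every coordinate: let those outside `J` increase to `∞` along `b`.
  set b : ℕ → Fin d → ℝ := fun n i => if i ∈ J then c i else n + 1
  have hb_pos : ∀ n i, 0 < b n i := fun n i => by
    by_cases hi : i ∈ J <;> simp [b, hi, hc, Nat.cast_add_one_pos]
  have hb : Monotone b := fun m n hmn i => by
    by_cases hi : i ∈ J <;> simp [b, hi, hmn]
  have hb_top : ∀ i ∉ J, Tendsto (fun n => b n i) atTop atTop := fun i hi => by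
    simpa [b, hi] using tendsto_atTop_add_const_right _ 1 tendsto_natCast_atTop_atTop
  have hlim := (ENNReal.tendsto_toReal (measure_ne_top μ _)).comp
    (tendsto_measure_forall_le_of_monotone (X := X) hb (fun n i hi => if_pos hi) hb_top)
  have hlim_t := (ENNReal.tendsto_toReal (measure_ne_top μ _)).comp
    (tendsto_measure_forall_le_of_monotone (X := X) (c := fun i => t * c i)
      (b := fun n i => t * b n i) (fun m n hmn i => mul_le_mul_of_nonneg_left (hb hmn i) ht.le)
      (fun n i hi => by simp [b, hi])
      (fun i hi => (hb_top i hi).const_mul_atTop ht))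
  refine tendsto_nhds_unique (hlim_t.rpow_const (Or.inr ht.le)) (hlim.congr fun n => ?_)
  exact (hX.maxStable t ht (b n) (hb_pos n)).symm

theorem one_sub_measureReal_forall_le_le [IsProbabilityMeasure μ] (hX : IsMEVFrechet μ X)
    {J : Finset (Fin d)} {c : Fin d → ℝ} (hc : ∀ i ∈ J, 0 < c i) :
    1 - μ.real {ω | ∀ i ∈ J, X i ω ≤ c i} ≤ ∑ i ∈ J, (c i)⁻¹ := by
  have hmarg : ∀ i, MeasurableSet {ω | X i ω ≤ c i} := fun i =>
    measurableSet_le (hX.meas i) measurable_const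
  calc 1 - μ.real {ω | ∀ i ∈ J, X i ω ≤ c i}
      = μ.real {ω | ∀ i ∈ J, X i ω ≤ c i}ᶜ :=
        (probReal_compl_eq_one_sub (measurableSet_forall_mem_le hX.meas J c)).symm
    _ ≤ μ.real (⋃ i ∈ J, {ω | X i ω ≤ c i}ᶜ) :=
        measureReal_mono (fun ω hω => by simpa using hω) (measure_ne_top μ _)
    _ ≤ ∑ i ∈ J, μ.real {ω | X i ω ≤ c i}ᶜ := measureReal_biUnion_finset_le _ _
    _ ≤ ∑ i ∈ J, (c i)⁻¹ := Finset.sum_le_sum fun i hi => by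
        rw [probReal_compl_eq_one_sub (hmarg i)]
        change 1 - margCDF μ X i (c i) ≤ _
        linarith [hX.frechet i (c i) (hc i hi), Real.add_one_le_exp (-(c i)⁻¹)]

theorem measureReal_forall_le_pos [IsProbabilityMeasure μ] (hX : IsMEVFrechet μ X)
    {J : Finset (Fin d)} {c : Fin d → ℝ} (hc : ∀ i ∈ J, 0 < c i) :
    0 < μ.real {ω | ∀ i ∈ J, X i ω ≤ c i} := by
  -- At the scale `1 + S` the union bound is below `1`.
  set S := ∑ i ∈ J, (c i)⁻¹
  have hS : 0 ≤ S := Finset.sum_nonneg fun i hi => (inv_pos.2 (hc i hi)).le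
  have hs : 0 < 1 + S := by linarith
  have hsc : ∀ i ∈ J, 0 < (1 + S) * c i := fun i hi => mul_pos hs (hc i hi)
  have hsum : ∑ i ∈ J, ((1 + S) * c i)⁻¹ < 1 := by
    simp only [mul_inv, ← Finset.mul_sum]
    rw [inv_mul_lt_iff₀ hs]
    linarith
  rw [← hX.measureReal_forall_le_mul_rpow hc hs]
  exact Real.rpow_pos_of_pos (by linarith [hX.one_sub_measureReal_forall_le_le hsc]) _

theorem margCDF_le_iff [IsFiniteMeasure μ] (hX : IsMEVFrechet μ X) (i : Fin d) {u v : ℝ}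
    (hu₀ : 0 < u) (hu₁ : u < 1) : margCDF μ X i v ≤ u ↔ v ≤ (-Real.log u)⁻¹ := by
  set a := (-Real.log u)⁻¹
  have ha : 0 < a := inv_pos.2 (neg_pos.2 (Real.log_neg hu₀ hu₁))
  have hFa : margCDF μ X i a = u := by
    rw [hX.frechet i a ha, inv_inv, neg_neg, Real.exp_log hu₀]
  refine ⟨fun h => ?_, fun h => hFa ▸ measureReal_mono fun ω hω => le_trans hω h⟩
  by_contra! hav
  have : margCDF μ X i a < margCDF μ X i v := by
    rw [hX.frechet i a ha, hX.frechet i v (ha.trans hav)]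
    exact Real.exp_lt_exp.2 (neg_lt_neg (inv_strictAnti₀ ha hav))
  linarith

theorem setOf_lt_Msub [IsFiniteMeasure μ] (hX : IsMEVFrechet μ X) (hI : I.Nonempty)
    {u : ℝ} (hu₀ : 0 < u) (hu₁ : u < 1) :
    {ω | u < Msub μ X I hI ω} = {ω | ∀ i ∈ I, X i ω ≤ (-Real.log u)⁻¹}ᶜ := by
  ext ω
  simp only [Set.mem_ofPred_eq, Set.mem_compl_iff, ← not_le, Msub, Finset.sup'_le_iff,
    hX.margCDF_le_iff _ hu₀ hu₁]


theorem measureReal_forall_le_and_forall_le_pos [IsProbabilityMeasure μ]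
    (hX : IsMEVFrechet μ X) (hdisj : Disjoint I₁ I₂) {a b : ℝ} (ha : 0 < a) (hb : 0 < b) :
    0 < μ.real {ω | (∀ i ∈ I₁, X i ω ≤ a) ∧ ∀ j ∈ I₂, X j ω ≤ b} := by
  rw [setOf_forall_le_and_forall_le hdisj]
  exact hX.measureReal_forall_le_pos fun i _ => by split_ifs <;> assumption

theorem exp_neg_mevL [IsProbabilityMeasure μ] (hX : IsMEVFrechet μ X) (hdisj : Disjoint I₁ I₂)
    {a b : ℝ} (ha : 0 < a) (hb : 0 < b) :
    Real.exp (-mevL μ X I₁ I₂ a b) = μ.real {ω | (∀ i ∈ I₁, X i ω ≤ a) ∧ ∀ j ∈ I₂, X j ω ≤ b} := by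
  rw [mevL, neg_neg]
  exact Real.exp_log (hX.measureReal_forall_le_and_forall_le_pos hdisj ha hb)

theorem mevL_mul [IsProbabilityMeasure μ] (hX : IsMEVFrechet μ X) (hdisj : Disjoint I₁ I₂)
    {s a b : ℝ} (hs : 0 < s) (ha : 0 < a) (hb : 0 < b) :
    mevL μ X I₁ I₂ (s * a) (s * b) = s⁻¹ * mevL μ X I₁ I₂ a b := by
  have hc : ∀ i ∈ I₁ ∪ I₂, 0 < if i ∈ I₁ then a else b := fun i _ => by
    split_ifs <;> assumption
  have h := hX.measureReal_forall_le_mul_rpow hc hs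
  simp only [mul_ite, ← setOf_forall_le_and_forall_le hdisj] at h
  have hlog := congrArg Real.log h
  rw [Real.log_rpow (hX.measureReal_forall_le_and_forall_le_pos hdisj (mul_pos hs ha)
    (mul_pos hs hb))] at hlog
  change -Real.log (μ.real _) = s⁻¹ * -Real.log (μ.real _)
  rw [← hlog]
  field_simp

theorem mevL_anti [IsProbabilityMeasure μ] (hX : IsMEVFrechet μ X) (hdisj : Disjoint I₁ I₂)
    {a b a' b' : ℝ} (ha' : 0 < a') (hb' : 0 < b') (haa : a' ≤ a) (hbb : b' ≤ b) :
    mevL μ X I₁ I₂ a b ≤ mevL μ X I₁ I₂ a' b' := by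
  refine neg_le_neg (Real.log_le_log (hX.measureReal_forall_le_and_forall_le_pos hdisj ha' hb')
    (measureReal_mono ?_))
  exact fun ω ⟨h₁, h₂⟩ => ⟨fun i hi => (h₁ i hi).trans haa, fun j hj => (h₂ j hj).trans hbb⟩

theorem continuousAt_mevL_inv [IsProbabilityMeasure μ] (hX : IsMEVFrechet μ X)
    (hdisj : Disjoint I₁ I₂) {x y : ℝ} (hx : 0 < x) (hy : 0 < y) :
    ContinuousAt (fun z : ℝ × ℝ => mevL μ X I₁ I₂ z.1⁻¹ z.2⁻¹) (x, y) :=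
  continuousAt_of_monotone_of_homogeneous (g := fun p q => mevL μ X I₁ I₂ p⁻¹ q⁻¹)
    (fun _ _ _ _ hp hq hpp hqq => hX.mevL_anti hdisj (inv_pos.2 (hp.trans_le hpp))
      (inv_pos.2 (hq.trans_le hqq)) (inv_anti₀ hp hpp) (inv_anti₀ hq hqq))
    (fun s p q hs hp hq => by
      simp only [mul_inv]
      rw [hX.mevL_mul hdisj (inv_pos.2 hs) (inv_pos.2 hp) (inv_pos.2 hq), inv_inv])
    hx hy

theorem tendsto_mul_one_sub_measureReal [IsProbabilityMeasure μ] (hX : IsMEVFrechet μ X)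
    (hdisj : Disjoint I₁ I₂) {p q : ℝ → ℝ} {x y : ℝ} (hx : 0 < x) (hy : 0 < y)
    (hp : Tendsto (fun t => t * p t) atTop (𝓝 x)) (hq : Tendsto (fun t => t * q t) atTop (𝓝 y)) :
    Tendsto
      (fun t => t * (1 - μ.real {ω | (∀ i ∈ I₁, X i ω ≤ (p t)⁻¹) ∧ ∀ j ∈ I₂, X j ω ≤ (q t)⁻¹}))
      atTop (𝓝 (mevL μ X I₁ I₂ x⁻¹ y⁻¹)) := by
  have hpos : ∀ᶠ t in atTop, 0 < t ∧ 0 < p t ∧ 0 < q t := by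
    filter_upwards [eventually_gt_atTop 0, hp.eventually (lt_mem_nhds hx),
      hq.eventually (lt_mem_nhds hy)] with t ht htp htq
    exact ⟨ht, pos_of_mul_pos_right htp ht.le, pos_of_mul_pos_right htq ht.le⟩
  have hscaled : Tendsto (fun t => t * mevL μ X I₁ I₂ (p t)⁻¹ (q t)⁻¹) atTop
      (𝓝 (mevL μ X I₁ I₂ x⁻¹ y⁻¹)) := by
    refine ((hX.continuousAt_mevL_inv hdisj hx hy).tendsto.comp (hp.prodMk_nhds hq)).congr' ?_
    filter_upwards [hpos] with t ⟨ht, htp, htq⟩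
    simp only [Function.comp_apply, mul_inv]
    rw [hX.mevL_mul hdisj (inv_pos.2 ht) (inv_pos.2 htp) (inv_pos.2 htq), inv_inv]
  have hexp : HasDerivAt (fun h => 1 - Real.exp (-h)) 1 0 := by
    simpa using ((Real.hasDerivAt_exp (-0)).comp (0 : ℝ) (hasDerivAt_neg 0)).const_sub 1
  rw [← one_mul (mevL μ X I₁ I₂ x⁻¹ y⁻¹)]
  refine (tendsto_mul_comp_of_hasDerivAt hexp (by simp) hscaled).congr' ?_
  filter_upwards [hpos] with t ⟨_, htp, htq⟩
  rw [hX.exp_neg_mevL hdisj (inv_pos.2 htp) (inv_pos.2 htq)]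


theorem mevL_empty_inv_inv [IsProbabilityMeasure μ] (hX : IsMEVFrechet μ X) {x : ℝ}
    (hx : 0 < x) : mevL μ X I ∅ x⁻¹ x⁻¹ = x * extCoef μ X I := by
  simpa [extCoef] using
    hX.mevL_mul (I₁ := I) (disjoint_empty_right I) (inv_pos.2 hx) one_pos one_pos

theorem extCoef_pos [IsProbabilityMeasure μ] (hX : IsMEVFrechet μ X) (hI : I.Nonempty) :
    0 < extCoef μ X I := by
  obtain ⟨i, hi⟩ := hI
  have hpos := hX.measureReal_forall_le_and_forall_le_pos (disjoint_empty_right I) one_pos one_pos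
  have hle : μ.real {ω | (∀ i ∈ I, X i ω ≤ 1) ∧ ∀ j ∈ (∅ : Finset (Fin d)), X j ω ≤ 1}
      ≤ margCDF μ X i 1 := measureReal_mono fun ω hω => hω.1 i hi
  rw [hX.frechet i 1 one_pos] at hle
  exact neg_pos.2 (Real.log_neg hpos (hle.trans_lt (by norm_num)))

theorem tendsto_mul_measureReal_lt_Msub [IsProbabilityMeasure μ] (hX : IsMEVFrechet μ X)
    (hI : I.Nonempty) {x : ℝ} (hx : 0 < x) :
    Tendsto (fun t => t * μ.real {ω | 1 - x / t < Msub μ X I hI ω}) atTop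
      (𝓝 (x * extCoef μ X I)) := by
  have hlog := tendsto_mul_neg_log_one_sub_div x
  have := hX.tendsto_mul_one_sub_measureReal (disjoint_empty_right I) hx hx hlog hlog
  rw [hX.mevL_empty_inv_inv hx] at this
  refine this.congr' ?_
  filter_upwards [eventually_gt_atTop x] with t hxt
  have hu := one_sub_div_mem_Ioo hx hxt
  rw [hX.setOf_lt_Msub hI hu.1 hu.2,
    probReal_compl_eq_one_sub (measurableSet_forall_mem_le hX.meas I _)]
  simp

theorem tendsto_mul_measureReal_lt_Msub_or [IsProbabilityMeasure μ] (hX : IsMEVFrechet μ X)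
    (hdisj : Disjoint I₁ I₂) (h₁ : I₁.Nonempty) (h₂ : I₂.Nonempty) {x y : ℝ} (hx : 0 < x)
    (hy : 0 < y) :
    Tendsto
      (fun t => t * μ.real {ω | 1 - x / t < Msub μ X I₁ h₁ ω ∨ 1 - y / t < Msub μ X I₂ h₂ ω})
      atTop (𝓝 (mevL μ X I₁ I₂ x⁻¹ y⁻¹)) := by
  refine (hX.tendsto_mul_one_sub_measureReal hdisj hx hy (tendsto_mul_neg_log_one_sub_div x)
    (tendsto_mul_neg_log_one_sub_div y)).congr' ?_
  filter_upwards [eventually_gt_atTop x, eventually_gt_atTop y] with t hxt hyt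
  have hu := one_sub_div_mem_Ioo hx hxt
  have hv := one_sub_div_mem_Ioo hy hyt
  rw [Set.ofPred_or, hX.setOf_lt_Msub h₁ hu.1 hu.2, hX.setOf_lt_Msub h₂ hv.1 hv.2,
    ← Set.compl_inter, probReal_compl_eq_one_sub
      ((measurableSet_forall_mem_le hX.meas I₁ _).inter (measurableSet_forall_mem_le hX.meas I₂ _))]
  rfl

end IsMEVFrechet

end MEV

/-- For a MEV distribution with unit Fréchet marginals the conditional
tail limits `Λ_U^{(I₁|I₂)}(x,y)` and `Λ_U^{(I₂|I₁)}(y,x)` exist and satisfy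
`yε_{I₂}·Λ_U^{(I₁|I₂)}(x,y) = xε_{I₁}·Λ_U^{(I₂|I₁)}(y,x) = xε_{I₁} + yε_{I₂} - l^{(I₁,I₂)}(x⁻¹,y⁻¹)`. -/
theorem statement3 {Ω : Type*} [MeasurableSpace Ω] (μ : Measure Ω) [IsProbabilityMeasure μ]
    {d : ℕ} (X : Fin d → Ω → ℝ) (hX : IsMEVFrechet μ X)
    (I₁ I₂ : Finset (Fin d)) (h1 : I₁.Nonempty) (h2 : I₂.Nonempty) (hdisj : Disjoint I₁ I₂)
    (x y : ℝ) (hx : 0 < x) (hy : 0 < y) :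
    ∃ L₁ L₂ : ℝ,
      Tendsto
        (fun t : ℝ =>
          (μ {ω | 1 - x / t < Msub μ X I₁ h1 ω ∧ 1 - y / t < Msub μ X I₂ h2 ω}).toReal /
            (μ {ω | 1 - y / t < Msub μ X I₂ h2 ω}).toReal)
        atTop (nhds L₁) ∧
      Tendsto
        (fun t : ℝ =>
          (μ {ω | 1 - y / t < Msub μ X I₂ h2 ω ∧ 1 - x / t < Msub μ X I₁ h1 ω}).toReal /
            (μ {ω | 1 - x / t < Msub μ X I₁ h1 ω}).toReal)
        atTop (nhds L₂) ∧
      y * extCoef μ X I₂ * L₁ = x * extCoef μ X I₁ * L₂ ∧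
      y * extCoef μ X I₂ * L₁
        = x * extCoef μ X I₁ + y * extCoef μ X I₂ - mevL μ X I₁ I₂ x⁻¹ y⁻¹ := by
  have hA := hX.tendsto_mul_measureReal_lt_Msub h1 hx
  have hB := hX.tendsto_mul_measureReal_lt_Msub h2 hy
  have hAB := hX.tendsto_mul_measureReal_lt_Msub_or hdisj h1 h2 hx hy
  have hε₁ := hX.extCoef_pos h1
  have hε₂ := hX.extCoef_pos h2
  set ε₁ := extCoef μ X I₁
  set ε₂ := extCoef μ X I₂
  set ℓ := mevL μ X I₁ I₂ x⁻¹ y⁻¹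
  have hboth : Tendsto
      (fun t => t * μ.real {ω | 1 - x / t < Msub μ X I₁ h1 ω ∧ 1 - y / t < Msub μ X I₂ h2 ω})
      atTop (𝓝 (x * ε₁ + y * ε₂ - ℓ)) := by
    refine ((hA.add hB).sub hAB).congr fun t => ?_
    have := measureReal_union_add_inter (μ := μ) (s := {ω | 1 - x / t < Msub μ X I₁ h1 ω})
      (t := {ω | 1 - y / t < Msub μ X I₂ h2 ω})
      (measurableSet_lt measurable_const (measurable_Msub (μ := μ) hX.meas h2))
    rw [Set.ofPred_and, Set.ofPred_or]
    linear_combination (-t) * this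
  refine ⟨(x * ε₁ + y * ε₂ - ℓ) / (y * ε₂), (x * ε₁ + y * ε₂ - ℓ) / (x * ε₁),
    tendsto_div_of_tendsto_mul hboth hB (by positivity), ?_, by field_simp, by field_simp⟩
  simp only [and_comm (a := 1 - y / _ < _)]
  exact tendsto_div_of_tendsto_mul hboth hA (by positivity)
end

section
/- Let X = (X₁,…,X_d) be a random vector whose joint distribution function F is a MEV distribution with unit Fréchet marginals, and let I₁, I₂ be disjoint non-empty subsets of {1,…,d}. Then: (i) for each y ≥ 0, the partial derivative ∂Λ_U^{(I₁,I₂)}(x,y)/∂x exists for almost all x > 0 and satisfies 0 ≤ ∂Λ_U^{(I₁,I₂)}(x,y)/∂x ≤ |I₁|; (ii) for each x ≥ 0, the partial derivative ∂Λ_U^{(I₁,I₂)}(x,y)/∂y exists for almost all y > 0 and satisfies 0 ≤ ∂Λ_U^{(I₁,I₂)}(x,y)/∂y ≤ |I₂|; (iii) the functions x ↦ ∂Λ_U^{(I₁,I₂)}(x,y)/∂y and y ↦ ∂Λ_U^{(I₁,I₂)}(x,y)/∂x are defined and non-decreasing almost everywhere on [0,∞). -/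
open MeasureTheory Filter Finset

/-- The upper-tail dependence function `Λ_U^{(I₁,I₂)}` on `[0,∞)²`, with the grounding
convention `Λ_U(x,y) = 0` when `x = 0` or `y = 0`. -/
noncomputable def lambdaU {Ω : Type*} [MeasurableSpace Ω] (μ : Measure Ω) {d : ℕ}
    (X : Fin d → Ω → ℝ) (I₁ I₂ : Finset (Fin d)) (x y : ℝ) : ℝ :=
  if x ≤ 0 ∨ y ≤ 0 then 0
  else x * extCoef μ X I₁ + y * extCoef μ X I₂ - mevL μ X I₁ I₂ x⁻¹ y⁻¹

/-!
For `x, y > 0`, `Λ_U(x, y) = x ε₁ + y ε₂ + log G(1/x, 1/y)`, where `G(u, v)` is the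
probability that every coordinate in `I₁` is at most `u` and every coordinate in `I₂` at most
`v`. Max-stability gives `G(t u, t v) = G(u, v) ^ (1/t) = 1 + log G(u, v) / t + o(1/t)` as
`t → ∞`, so the rectangle inequality of the distribution function `G` at the points `t (u, v)`
becomes the rectangle inequality for `log G`. Sending one threshold to `∞`, where `G` reduces
to the marginal `exp (-ε / u)`, one finds that `Λ_U` is supermodular and, in each variable,
non-decreasing with increments at most `ε₁ ≤ |I₁|` per unit. Monotone functions are
differentiable almost everywhere, and these bounds pass to the derivatives.
-/

open Topology

section RealAnalysis

variable {f g : ℝ → ℝ}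

theorem Monotone.ae_hasDerivAt_mem_Icc {K : ℝ} (hf : Monotone f)
    (hK : Monotone fun x => K * x - f x) :
    ∀ᵐ x, ∃ c, HasDerivAt f c x ∧ 0 ≤ c ∧ c ≤ K := by
  filter_upwards [hf.ae_differentiableAt] with x hx
  refine ⟨deriv f x, hx.hasDerivAt, hf.deriv_nonneg, ?_⟩
  have h : HasDerivAt (fun x => K * x - f x) (K * 1 - deriv f x) x :=
    ((hasDerivAt_id' x).const_mul K).sub hx.hasDerivAt
  have := hK.deriv_nonneg (x := x)
  rw [h.deriv] at this
  linarith

theorem Monotone.ae_deriv_le_of_monotone_sub (hf : Monotone f) (hgf : Monotone (g - f)) :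
    ∀ᵐ x, DifferentiableAt ℝ f x ∧ DifferentiableAt ℝ g x ∧ deriv f x ≤ deriv g x := by
  filter_upwards [hf.ae_differentiableAt, hgf.ae_differentiableAt] with x hf' hgf'
  have hg' : DifferentiableAt ℝ g x := by simpa using hgf'.add hf'
  refine ⟨hf', hg', ?_⟩
  have := hgf.deriv_nonneg (x := x)
  rw [deriv_sub hg' hf'] at this
  linarith

theorem Real.tendsto_mul_rpow_inv_sub_one {c : ℝ} (hc : 0 < c) :
    Tendsto (fun t => t * (c ^ t⁻¹ - 1)) atTop (𝓝 (Real.log c)) := by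
  have h := (Real.hasStrictDerivAt_const_rpow hc 0).hasDerivAt
  rw [hasDerivAt_iff_tendsto_slope_zero] at h
  have hinv : Tendsto (fun t : ℝ => t⁻¹) atTop (𝓝[≠] 0) :=
    tendsto_inv_atTop_nhdsGT_zero.mono_right (nhdsWithin_mono _ fun _ hx => hx.ne')
  simpa [Function.comp_def] using h.comp hinv

theorem log_supermodular_of_rpow_homogeneous {G : ℝ → ℝ → ℝ}
    (hpos : ∀ u v, 0 < u → 0 < v → 0 < G u v)
    (hsuper : ∀ ⦃u₁ u₂ v₁ v₂ : ℝ⦄, u₁ ≤ u₂ → v₁ ≤ v₂ →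
      G u₂ v₁ + G u₁ v₂ ≤ G u₂ v₂ + G u₁ v₁)
    (hhom : ∀ t u v, 0 < t → 0 < u → 0 < v → G (t * u) (t * v) ^ t = G u v)
    {u₁ u₂ v₁ v₂ : ℝ} (hu₁ : 0 < u₁) (hu : u₁ ≤ u₂) (hv₁ : 0 < v₁) (hv : v₁ ≤ v₂) :
    Real.log (G u₂ v₁) + Real.log (G u₁ v₂) ≤ Real.log (G u₂ v₂) + Real.log (G u₁ v₁) := by
  have hscale : ∀ t u v, 0 < t → 0 < u → 0 < v → G (t * u) (t * v) = G u v ^ t⁻¹ := by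
    intro t u v ht hu hv
    rw [← hhom t u v ht hu hv,
      Real.rpow_rpow_inv (hpos _ _ (mul_pos ht hu) (mul_pos ht hv)).le ht.ne']
  have hlim : ∀ u v, 0 < u → 0 < v →
      Tendsto (fun t => t * (G (t * u) (t * v) - 1)) atTop (𝓝 (Real.log (G u v))) := by
    intro u v hu hv
    refine (Real.tendsto_mul_rpow_inv_sub_one (hpos u v hu hv)).congr' ?_
    filter_upwards [eventually_gt_atTop 0] with t ht
    rw [hscale t u v ht hu hv]
  have hu₂ := hu₁.trans_le hu
  have hv₂ := hv₁.trans_le hv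
  refine le_of_tendsto_of_tendsto ((hlim _ _ hu₂ hv₁).add (hlim _ _ hu₁ hv₂))
    ((hlim _ _ hu₂ hv₂).add (hlim _ _ hu₁ hv₁)) ?_
  filter_upwards [eventually_gt_atTop 0] with t ht
  have := mul_le_mul_of_nonneg_left
    (hsuper (mul_le_mul_of_nonneg_left hu ht.le) (mul_le_mul_of_nonneg_left hv ht.le)) ht.le
  linarith

end RealAnalysis

section Blocks

variable {Ω : Type*} {d : ℕ} {X : Fin d → Ω → ℝ} {I₁ I₂ : Finset (Fin d)} {t u v : ℝ}

def blockEvent (X : Fin d → Ω → ℝ) (I₁ I₂ : Finset (Fin d)) (u v : ℝ) : Set Ω :=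
  {ω | (∀ i ∈ I₁, X i ω ≤ u) ∧ (∀ j ∈ I₂, X j ω ≤ v)}

theorem blockEvent_mono {u' v' : ℝ} (hu : u ≤ u') (hv : v ≤ v') :
    blockEvent X I₁ I₂ u v ⊆ blockEvent X I₁ I₂ u' v' :=
  fun _ ⟨h₁, h₂⟩ => ⟨fun i hi => (h₁ i hi).trans hu, fun j hj => (h₂ j hj).trans hv⟩

variable [MeasurableSpace Ω] {μ : Measure Ω}

noncomputable def blockCDF (μ : Measure Ω) (X : Fin d → Ω → ℝ) (I₁ I₂ : Finset (Fin d))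
    (u v : ℝ) : ℝ :=
  μ.real (blockEvent X I₁ I₂ u v)

theorem mevL_eq_neg_log_blockCDF (μ : Measure Ω) (X : Fin d → Ω → ℝ) (I₁ I₂ : Finset (Fin d))
    (u v : ℝ) : mevL μ X I₁ I₂ u v = -Real.log (blockCDF μ X I₁ I₂ u v) :=
  rfl

theorem blockCDF_comm (μ : Measure Ω) (X : Fin d → Ω → ℝ) (I₁ I₂ : Finset (Fin d))
    (u v : ℝ) : blockCDF μ X I₂ I₁ v u = blockCDF μ X I₁ I₂ u v := by
  simp only [blockCDF, blockEvent, and_comm]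

theorem blockCDF_empty_right (μ : Measure Ω) (X : Fin d → Ω → ℝ) (I : Finset (Fin d))
    (u v w : ℝ) : blockCDF μ X I ∅ u v = blockCDF μ X I ∅ u w := by
  simp [blockCDF, blockEvent]

theorem measurableSet_blockEvent (hX : ∀ i, Measurable (X i)) (I₁ I₂ : Finset (Fin d))
    (u v : ℝ) : MeasurableSet (blockEvent X I₁ I₂ u v) := by
  have hle : ∀ i w, MeasurableSet {ω | X i ω ≤ w} := fun i _ =>
    measurableSet_le (hX i) measurable_const
  simp only [blockEvent, Set.ofPred_and, Set.ofPred_forall]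
  exact (MeasurableSet.biInter I₁.countable_toSet fun i _ => hle i u).inter
    (MeasurableSet.biInter I₂.countable_toSet fun j _ => hle j v)

theorem blockCDF_mono [IsFiniteMeasure μ] {u' v' : ℝ} (hu : u ≤ u') (hv : v ≤ v') :
    blockCDF μ X I₁ I₂ u v ≤ blockCDF μ X I₁ I₂ u' v' :=
  measureReal_mono (blockEvent_mono hu hv)

theorem blockCDF_le_one [IsProbabilityMeasure μ] : blockCDF μ X I₁ I₂ u v ≤ 1 :=
  measureReal_le_one

theorem blockCDF_supermodular [IsFiniteMeasure μ] (hX : ∀ i, Measurable (X i))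
    {u₁ u₂ v₁ v₂ : ℝ} (hu : u₁ ≤ u₂) (hv : v₁ ≤ v₂) :
    blockCDF μ X I₁ I₂ u₂ v₁ + blockCDF μ X I₁ I₂ u₁ v₂ ≤
      blockCDF μ X I₁ I₂ u₂ v₂ + blockCDF μ X I₁ I₂ u₁ v₁ := by
  have hinter : blockEvent X I₁ I₂ u₂ v₁ ∩ blockEvent X I₁ I₂ u₁ v₂ = blockEvent X I₁ I₂ u₁ v₁ :=
    subset_antisymm (fun _ ⟨⟨_, h₂⟩, ⟨h₁, _⟩⟩ => ⟨h₁, h₂⟩)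
      (Set.subset_inter (blockEvent_mono hu le_rfl) (blockEvent_mono le_rfl hv))
  have hunion : blockEvent X I₁ I₂ u₂ v₁ ∪ blockEvent X I₁ I₂ u₁ v₂ ⊆ blockEvent X I₁ I₂ u₂ v₂ :=
    Set.union_subset (blockEvent_mono le_rfl hv) (blockEvent_mono hu le_rfl)
  unfold blockCDF
  rw [← measureReal_union_add_inter (measurableSet_blockEvent hX I₁ I₂ u₁ v₂), hinter]
  exact add_le_add_left (measureReal_mono hunion) _

theorem tendsto_blockCDF_snd [IsFiniteMeasure μ] (I₁ I₂ : Finset (Fin d)) (u : ℝ) :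
    Tendsto (blockCDF μ X I₁ I₂ u) atTop (𝓝 (blockCDF μ X I₁ ∅ u u)) := by
  have hunion : ⋃ v, blockEvent X I₁ I₂ u v = blockEvent X I₁ ∅ u u := by
    ext ω
    simp only [Set.mem_iUnion, blockEvent, Set.mem_ofPred_eq, Finset.notMem_empty,
      IsEmpty.forall_iff, implies_true, and_true]
    refine ⟨fun ⟨_, h, _⟩ => h, fun h => ?_⟩
    obtain ⟨v, hv⟩ := ((eventually_all_finset I₂).2 fun j _ =>
      eventually_ge_atTop (X j ω)).exists
    exact ⟨v, h, hv⟩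
  have h := tendsto_measure_iUnion_atTop (μ := μ) fun v v' (hv : v ≤ v') =>
    blockEvent_mono (X := X) (I₁ := I₁) (I₂ := I₂) (le_refl u) hv
  rw [hunion] at h
  exact (ENNReal.tendsto_toReal (measure_ne_top μ _)).comp h

/-- The `min` accommodates coordinates lying in both `I₁` and `I₂`. -/
theorem tendsto_jointCDF_atTop [IsFiniteMeasure μ] (I₁ I₂ : Finset (Fin d)) (u v : ℝ) :
    Tendsto (fun a => jointCDF μ X fun i =>
        min (if i ∈ I₁ then u else a) (if i ∈ I₂ then v else a))
      atTop (𝓝 (blockCDF μ X I₁ I₂ u v)) := by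
  set s : ℝ → Set Ω := fun a => {ω | ∀ i, X i ω ≤
    min (if i ∈ I₁ then u else a) (if i ∈ I₂ then v else a)}
  have hmono : Monotone s := fun a a' ha ω hω i =>
    (hω i).trans (min_le_min (by split_ifs <;> simp [ha]) (by split_ifs <;> simp [ha]))
  have hunion : ⋃ a, s a = blockEvent X I₁ I₂ u v := by
    ext ω
    simp only [s, Set.mem_iUnion, Set.mem_ofPred_eq, blockEvent, le_min_iff]
    constructor
    · rintro ⟨a, h⟩
      exact ⟨fun i hi => by simpa [hi] using (h i).1, fun j hj => by simpa [hj] using (h j).2⟩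
    · rintro ⟨h₁, h₂⟩
      obtain ⟨a, ha⟩ := (eventually_all.2 fun i => eventually_ge_atTop (X i ω)).exists
      refine ⟨a, fun i => ⟨?_, ?_⟩⟩ <;> split_ifs with hi
      exacts [h₁ i hi, ha i, h₂ i hi, ha i]
  have h := tendsto_measure_iUnion_atTop (μ := μ) hmono
  rw [hunion] at h
  exact (ENNReal.tendsto_toReal (measure_ne_top μ _)).comp h

theorem blockCDF_rpow [IsFiniteMeasure μ] (hX : IsMEVFrechet μ X) (I₁ I₂ : Finset (Fin d))
    (ht : 0 < t) (hu : 0 < u) (hv : 0 < v) :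
    blockCDF μ X I₁ I₂ (t * u) (t * v) ^ t = blockCDF μ X I₁ I₂ u v := by
  have hscaled := ((tendsto_jointCDF_atTop (μ := μ) (X := X) I₁ I₂ (t * u) (t * v)).comp
    (tendsto_id.const_mul_atTop ht)).rpow_const (Or.inr ht.le)
  refine tendsto_nhds_unique (hscaled.congr' ?_) (tendsto_jointCDF_atTop I₁ I₂ u v)
  filter_upwards [eventually_gt_atTop 0] with a ha
  have hpos : ∀ i, 0 < min (if i ∈ I₁ then u else a) (if i ∈ I₂ then v else a) := fun i =>
    lt_min (by split_ifs <;> assumption) (by split_ifs <;> assumption)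
  rw [← hX.maxStable t ht _ hpos]
  simp only [Function.comp_apply, id, mul_min_of_nonneg _ _ ht.le, mul_ite]

end Blocks

section MaxStable

variable {Ω : Type*} [MeasurableSpace Ω] {μ : Measure Ω} [IsProbabilityMeasure μ] {d : ℕ}
  {X : Fin d → Ω → ℝ} {I₁ I₂ : Finset (Fin d)} {u v : ℝ}

theorem IsMEVFrechet.measureReal_lt_le_inv (hX : IsMEVFrechet μ X) (i : Fin d) (hu : 0 < u) :
    μ.real {ω | u < X i ω} ≤ u⁻¹ := by
  have hcompl : {ω | u < X i ω} = {ω | X i ω ≤ u}ᶜ := by ext; simp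
  rw [hcompl, probReal_compl_eq_one_sub (measurableSet_le (hX.meas i) measurable_const)]
  have hF : μ.real {ω | X i ω ≤ u} = Real.exp (-u⁻¹) := hX.frechet i u hu
  linarith [Real.add_one_le_exp (-u⁻¹)]

theorem IsMEVFrechet.one_sub_le_blockCDF (hX : IsMEVFrechet μ X) (I₁ I₂ : Finset (Fin d))
    (hu : 0 < u) (hv : 0 < v) :
    1 - (I₁.card * u⁻¹ + I₂.card * v⁻¹) ≤ blockCDF μ X I₁ I₂ u v := by
  have hcompl : (blockEvent X I₁ I₂ u v)ᶜ ⊆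
      (⋃ i ∈ I₁, {ω | u < X i ω}) ∪ ⋃ j ∈ I₂, {ω | v < X j ω} := by
    intro ω hω
    simp only [blockEvent, Set.mem_compl_iff, Set.mem_ofPred_eq, not_and_or, not_forall,
      not_le, exists_prop] at hω
    simpa using hω
  have hsum : ∀ (I : Finset (Fin d)) (w : ℝ), 0 < w →
      μ.real (⋃ i ∈ I, {ω | w < X i ω}) ≤ I.card * w⁻¹ := fun I w hw =>
    (measureReal_biUnion_finset_le I _).trans <| by
      simpa using Finset.sum_le_card_nsmul I _ _ fun i _ => hX.measureReal_lt_le_inv i hw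
  have := (measureReal_mono (μ := μ) hcompl).trans (measureReal_union_le _ _)
  rw [probReal_compl_eq_one_sub (measurableSet_blockEvent hX.meas I₁ I₂ u v)] at this
  unfold blockCDF
  linarith [hsum I₁ u hu, hsum I₂ v hv]

theorem IsMEVFrechet.blockCDF_pos (hX : IsMEVFrechet μ X) (I₁ I₂ : Finset (Fin d))
    (hu : 0 < u) (hv : 0 < v) : 0 < blockCDF μ X I₁ I₂ u v := by
  set C : ℝ := I₁.card * u⁻¹ + I₂.card * v⁻¹
  have ht : 0 < C + 1 := by positivity
  have hscaled := hX.one_sub_le_blockCDF I₁ I₂ (mul_pos ht hu) (mul_pos ht hv)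
  have hC : I₁.card * ((C + 1) * u)⁻¹ + I₂.card * ((C + 1) * v)⁻¹ = C / (C + 1) := by
    simp only [C, mul_inv]
    field_simp
  have hCt : C / (C + 1) < 1 := (div_lt_one ht).2 (lt_add_one C)
  rw [← blockCDF_rpow hX I₁ I₂ ht hu hv]
  exact Real.rpow_pos_of_pos (by linarith) _
theorem IsMEVFrechet.blockCDF_empty_eq_exp (hX : IsMEVFrechet μ X) (I : Finset (Fin d))
    (hu : 0 < u) : blockCDF μ X I ∅ u u = Real.exp (-extCoef μ X I / u) := by
  have hhom := blockCDF_rpow hX I ∅ hu one_pos one_pos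
  rw [mul_one] at hhom
  rw [← Real.rpow_rpow_inv (hX.blockCDF_pos I ∅ hu hu).le hu.ne', hhom,
    Real.rpow_def_of_pos (hX.blockCDF_pos I ∅ one_pos one_pos), extCoef,
    mevL_eq_neg_log_blockCDF, neg_neg, div_eq_mul_inv]

theorem extCoef_nonneg (μ : Measure Ω) [IsProbabilityMeasure μ] (X : Fin d → Ω → ℝ)
    (I : Finset (Fin d)) : 0 ≤ extCoef μ X I := by
  rw [extCoef, mevL_eq_neg_log_blockCDF, neg_nonneg]
  exact Real.log_nonpos measureReal_nonneg blockCDF_le_one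

/-- Let `u → ∞` in `1 - |I| / u ≤ exp (-ε_I / u)`. -/
theorem IsMEVFrechet.extCoef_le_card (hX : IsMEVFrechet μ X) (I : Finset (Fin d)) :
    extCoef μ X I ≤ I.card := by
  set k : ℝ := (I.card : ℝ)
  have hlim : Tendsto (fun u => -(u * Real.log (1 + -k / u))) atTop (𝓝 k) := by
    simpa using (Real.tendsto_mul_log_one_add_div_atTop (-k)).neg
  refine ge_of_tendsto hlim ?_
  filter_upwards [eventually_gt_atTop k] with u hku
  have hu : 0 < u := (Nat.cast_nonneg _).trans_lt hku
  have hlow := hX.one_sub_le_blockCDF I ∅ hu hu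
  rw [blockCDF_empty_right μ X I u u u, hX.blockCDF_empty_eq_exp I hu, Finset.card_empty,
    Nat.cast_zero, zero_mul, add_zero] at hlow
  have hpos : 0 < 1 + -k / u := by
    rw [neg_div, ← sub_eq_add_neg, sub_pos, div_lt_one hu]
    exact hku
  have hlog := (Real.log_le_iff_le_exp hpos).2 <| by
    rwa [neg_div, ← sub_eq_add_neg, div_eq_mul_inv]
  rw [le_div_iff₀ hu] at hlog
  linarith

theorem IsMEVFrechet.log_blockCDF_supermodular (hX : IsMEVFrechet μ X) {u₁ u₂ v₁ v₂ : ℝ}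
    (hu₁ : 0 < u₁) (hu : u₁ ≤ u₂) (hv₁ : 0 < v₁) (hv : v₁ ≤ v₂) :
    Real.log (blockCDF μ X I₁ I₂ u₂ v₁) + Real.log (blockCDF μ X I₁ I₂ u₁ v₂) ≤
      Real.log (blockCDF μ X I₁ I₂ u₂ v₂) + Real.log (blockCDF μ X I₁ I₂ u₁ v₁) :=
  log_supermodular_of_rpow_homogeneous (fun _ _ => hX.blockCDF_pos I₁ I₂)
    (fun _ _ _ _ => blockCDF_supermodular hX.meas) (fun _ _ _ => blockCDF_rpow hX I₁ I₂)
    hu₁ hu hv₁ hv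

theorem IsMEVFrechet.tendsto_log_blockCDF_snd (hX : IsMEVFrechet μ X) (I₁ I₂ : Finset (Fin d))
    (hu : 0 < u) :
    Tendsto (fun v => Real.log (blockCDF μ X I₁ I₂ u v)) atTop (𝓝 (-extCoef μ X I₁ / u)) := by
  have h := ((Real.continuousAt_log (hX.blockCDF_pos I₁ ∅ hu hu).ne').tendsto).comp
    (tendsto_blockCDF_snd (μ := μ) (X := X) I₁ I₂ u)
  rwa [hX.blockCDF_empty_eq_exp I₁ hu, Real.log_exp] at h

theorem IsMEVFrechet.tendsto_log_blockCDF_fst (hX : IsMEVFrechet μ X) (I₁ I₂ : Finset (Fin d))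
    (hv : 0 < v) :
    Tendsto (fun u => Real.log (blockCDF μ X I₁ I₂ u v)) atTop (𝓝 (-extCoef μ X I₂ / v)) :=
  (hX.tendsto_log_blockCDF_snd I₂ I₁ hv).congr fun u => by rw [blockCDF_comm]

/-- Letting `v' → ∞` in the log-supermodularity on `[u₁, u₂] × [v, v']`. -/
theorem IsMEVFrechet.log_blockCDF_sub_le (hX : IsMEVFrechet μ X) (hv : 0 < v) {u₁ u₂ : ℝ}
    (hu₁ : 0 < u₁) (hu : u₁ ≤ u₂) :
    Real.log (blockCDF μ X I₁ I₂ u₂ v) - Real.log (blockCDF μ X I₁ I₂ u₁ v) ≤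
      extCoef μ X I₁ / u₁ - extCoef μ X I₁ / u₂ := by
  have h := (hX.tendsto_log_blockCDF_snd I₁ I₂ (hu₁.trans_le hu)).sub
    (hX.tendsto_log_blockCDF_snd I₁ I₂ hu₁)
  refine ge_of_tendsto (by convert h using 2; ring) ?_
  filter_upwards [eventually_ge_atTop v] with v' hv'
  linarith [hX.log_blockCDF_supermodular (I₁ := I₁) (I₂ := I₂) hu₁ hu hv hv']

theorem IsMEVFrechet.le_log_blockCDF (hX : IsMEVFrechet μ X) (hu : 0 < u) (hv : 0 < v) :
    -extCoef μ X I₁ / u - extCoef μ X I₂ / v ≤ Real.log (blockCDF μ X I₁ I₂ u v) := by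
  have h : -extCoef μ X I₂ / v ≤ Real.log (blockCDF μ X I₁ I₂ u v) + extCoef μ X I₁ / u := by
    refine le_of_tendsto (hX.tendsto_log_blockCDF_fst I₁ I₂ hv) ?_
    filter_upwards [eventually_ge_atTop u] with u' hu'
    have := hX.log_blockCDF_sub_le (I₁ := I₁) (I₂ := I₂) hv hu hu'
    have := div_nonneg (extCoef_nonneg μ X I₁) (hu.trans_le hu').le
    linarith
  linarith [neg_div u (extCoef μ X I₁), neg_div v (extCoef μ X I₂)]

theorem IsMEVFrechet.log_blockCDF_le (hX : IsMEVFrechet μ X) (hu : 0 < u) (hv : 0 < v) :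
    Real.log (blockCDF μ X I₁ I₂ u v) ≤ -extCoef μ X I₂ / v := by
  refine ge_of_tendsto (hX.tendsto_log_blockCDF_fst I₁ I₂ hv) ?_
  filter_upwards [eventually_ge_atTop u] with u' hu'
  exact Real.log_le_log (hX.blockCDF_pos I₁ I₂ hu hv) (blockCDF_mono hu' le_rfl)

end MaxStable

section TailDependence

variable {Ω : Type*} [MeasurableSpace Ω] {μ : Measure Ω} {d : ℕ} {X : Fin d → Ω → ℝ}
  {I₁ I₂ : Finset (Fin d)} {x y : ℝ}

theorem lambdaU_comm (μ : Measure Ω) (X : Fin d → Ω → ℝ) (I₁ I₂ : Finset (Fin d)) (x y : ℝ) :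
    lambdaU μ X I₁ I₂ x y = lambdaU μ X I₂ I₁ y x := by
  have h : mevL μ X I₂ I₁ y⁻¹ x⁻¹ = mevL μ X I₁ I₂ x⁻¹ y⁻¹ := by
    rw [mevL_eq_neg_log_blockCDF, mevL_eq_neg_log_blockCDF, blockCDF_comm]
  unfold lambdaU
  rw [h]
  by_cases hxy : x ≤ 0 ∨ y ≤ 0
  · rw [if_pos hxy, if_pos hxy.symm]
  · rw [if_neg hxy, if_neg (mt Or.symm hxy)]
    ring

theorem lambdaU_of_nonpos (h : x ≤ 0 ∨ y ≤ 0) : lambdaU μ X I₁ I₂ x y = 0 :=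
  if_pos h

theorem lambdaU_of_pos (hx : 0 < x) (hy : 0 < y) :
    lambdaU μ X I₁ I₂ x y =
      x * extCoef μ X I₁ + y * extCoef μ X I₂ + Real.log (blockCDF μ X I₁ I₂ x⁻¹ y⁻¹) := by
  rw [lambdaU, if_neg (by simp [hx, hy]), mevL_eq_neg_log_blockCDF, sub_neg_eq_add]

variable [IsProbabilityMeasure μ]

theorem IsMEVFrechet.lambdaU_nonneg (hX : IsMEVFrechet μ X) (I₁ I₂ : Finset (Fin d)) (x y : ℝ) :
    0 ≤ lambdaU μ X I₁ I₂ x y := by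
  rcases le_or_gt x 0 with hx | hx
  · rw [lambdaU_of_nonpos (.inl hx)]
  rcases le_or_gt y 0 with hy | hy
  · rw [lambdaU_of_nonpos (.inr hy)]
  have := hX.le_log_blockCDF (I₁ := I₁) (I₂ := I₂) (inv_pos.2 hx) (inv_pos.2 hy)
  rw [div_inv_eq_mul, div_inv_eq_mul] at this
  rw [lambdaU_of_pos hx hy]
  linarith

theorem IsMEVFrechet.lambdaU_le_mul_extCoef (hX : IsMEVFrechet μ X) (I₁ I₂ : Finset (Fin d))
    (hx : 0 ≤ x) (y : ℝ) : lambdaU μ X I₁ I₂ x y ≤ x * extCoef μ X I₁ := by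
  have hε := mul_nonneg hx (extCoef_nonneg μ X I₁)
  rcases hx.eq_or_lt with rfl | hx
  · rwa [lambdaU_of_nonpos (.inl le_rfl)]
  rcases le_or_gt y 0 with hy | hy
  · rwa [lambdaU_of_nonpos (.inr hy)]
  have := hX.log_blockCDF_le (I₁ := I₁) (I₂ := I₂) (inv_pos.2 hx) (inv_pos.2 hy)
  rw [div_inv_eq_mul] at this
  rw [lambdaU_of_pos hx hy]
  linarith

theorem IsMEVFrechet.monotone_lambdaU_fst (hX : IsMEVFrechet μ X) (I₁ I₂ : Finset (Fin d))
    (y : ℝ) : Monotone fun x => lambdaU μ X I₁ I₂ x y := by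
  intro x₁ x₂ hx
  dsimp only
  rcases le_or_gt x₁ 0 with hx₁ | hx₁
  · rw [lambdaU_of_nonpos (.inl hx₁)]
    exact hX.lambdaU_nonneg I₁ I₂ x₂ y
  rcases le_or_gt y 0 with hy | hy
  · simp only [lambdaU_of_nonpos (.inr hy), le_refl]
  have hx₂ := hx₁.trans_le hx
  have := hX.log_blockCDF_sub_le (I₁ := I₁) (I₂ := I₂) (inv_pos.2 hy) (inv_pos.2 hx₂)
    (inv_anti₀ hx₁ hx)
  rw [div_inv_eq_mul, div_inv_eq_mul] at this
  simp only [lambdaU_of_pos hx₁ hy, lambdaU_of_pos hx₂ hy]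
  linarith

theorem IsMEVFrechet.monotone_mul_extCoef_sub_lambdaU (hX : IsMEVFrechet μ X)
    (I₁ I₂ : Finset (Fin d)) (y : ℝ) :
    Monotone fun x => extCoef μ X I₁ * x - lambdaU μ X I₁ I₂ x y := by
  intro x₁ x₂ hx
  have hε := mul_le_mul_of_nonneg_left hx (extCoef_nonneg μ X I₁)
  rcases le_or_gt y 0 with hy | hy
  · simpa only [lambdaU_of_nonpos (.inr hy), sub_zero] using hε
  rcases le_or_gt x₂ 0 with hx₂ | hx₂
  · simpa only [lambdaU_of_nonpos (.inl hx₂), lambdaU_of_nonpos (.inl (hx.trans hx₂)),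
      sub_zero] using hε
  rcases le_or_gt x₁ 0 with hx₁ | hx₁
  · have := hX.lambdaU_le_mul_extCoef I₁ I₂ hx₂.le y
    simp only [lambdaU_of_nonpos (.inl hx₁)]
    nlinarith
  have := Real.log_le_log (hX.blockCDF_pos I₁ I₂ (inv_pos.2 hx₂) (inv_pos.2 hy))
    (blockCDF_mono (μ := μ) (X := X) (I₁ := I₁) (I₂ := I₂) (inv_anti₀ hx₁ hx) le_rfl)
  simp only [lambdaU_of_pos hx₁ hy, lambdaU_of_pos hx₂ hy]
  linarith

theorem IsMEVFrechet.lambdaU_supermodular (hX : IsMEVFrechet μ X) {x₁ x₂ y₁ y₂ : ℝ}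
    (hx : x₁ ≤ x₂) (hy : y₁ ≤ y₂) :
    lambdaU μ X I₁ I₂ x₂ y₁ + lambdaU μ X I₁ I₂ x₁ y₂ ≤
      lambdaU μ X I₁ I₂ x₂ y₂ + lambdaU μ X I₁ I₂ x₁ y₁ := by
  rcases le_or_gt y₁ 0 with hy₁ | hy₁
  · simp only [lambdaU_of_nonpos (.inr hy₁), zero_add, add_zero]
    exact hX.monotone_lambdaU_fst I₁ I₂ y₂ hx
  rcases le_or_gt x₁ 0 with hx₁ | hx₁
  · simp only [lambdaU_of_nonpos (.inl hx₁), add_zero, lambdaU_comm μ X I₁ I₂ x₂]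
    exact hX.monotone_lambdaU_fst I₂ I₁ x₂ hy
  have := hX.log_blockCDF_supermodular (I₁ := I₁) (I₂ := I₂) (inv_pos.2 (hx₁.trans_le hx))
    (inv_anti₀ hx₁ hx) (inv_pos.2 (hy₁.trans_le hy)) (inv_anti₀ hy₁ hy)
  simp only [lambdaU_of_pos, hx₁, hy₁, hx₁.trans_le hx, hy₁.trans_le hy]
  linarith

theorem IsMEVFrechet.ae_hasDerivAt_lambdaU_fst (hX : IsMEVFrechet μ X) (I₁ I₂ : Finset (Fin d))
    (y : ℝ) :
    ∀ᵐ x ∂(volume.restrict (Set.Ioi (0 : ℝ))),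
      ∃ c : ℝ, HasDerivAt (fun s => lambdaU μ X I₁ I₂ s y) c x ∧ 0 ≤ c ∧ c ≤ I₁.card := by
  refine ae_restrict_of_ae ?_
  filter_upwards [(hX.monotone_lambdaU_fst I₁ I₂ y).ae_hasDerivAt_mem_Icc
    (hX.monotone_mul_extCoef_sub_lambdaU I₁ I₂ y)] with x ⟨c, hc, hc₀, hcε⟩
  exact ⟨c, hc, hc₀, hcε.trans (hX.extCoef_le_card I₁)⟩

theorem IsMEVFrechet.ae_deriv_lambdaU_fst_le (hX : IsMEVFrechet μ X) (I₁ I₂ : Finset (Fin d))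
    {y₁ y₂ : ℝ} (hy : y₁ ≤ y₂) :
    ∀ᵐ x ∂(volume.restrict (Set.Ioi (0 : ℝ))),
      DifferentiableAt ℝ (fun s => lambdaU μ X I₁ I₂ s y₁) x ∧
      DifferentiableAt ℝ (fun s => lambdaU μ X I₁ I₂ s y₂) x ∧
      deriv (fun s => lambdaU μ X I₁ I₂ s y₁) x ≤ deriv (fun s => lambdaU μ X I₁ I₂ s y₂) x :=
  ae_restrict_of_ae <| (hX.monotone_lambdaU_fst I₁ I₂ y₁).ae_deriv_le_of_monotone_sub
    fun a b hab => by
      have := hX.lambdaU_supermodular (I₁ := I₁) (I₂ := I₂) hab hy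
      simp only [Pi.sub_apply]
      linarith

end TailDependence

theorem statement7_general {Ω : Type*} [MeasurableSpace Ω] (μ : Measure Ω) [IsProbabilityMeasure μ]
    {d : ℕ} (X : Fin d → Ω → ℝ) (hX : IsMEVFrechet μ X)
    (I₁ I₂ : Finset (Fin d)) :
    (∀ y : ℝ, 0 ≤ y →
      ∀ᵐ x ∂(volume.restrict (Set.Ioi (0 : ℝ))),
        ∃ c : ℝ, HasDerivAt (fun s => lambdaU μ X I₁ I₂ s y) c x ∧
          0 ≤ c ∧ c ≤ (I₁.card : ℝ)) ∧
    (∀ x : ℝ, 0 ≤ x →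
      ∀ᵐ y ∂(volume.restrict (Set.Ioi (0 : ℝ))),
        ∃ c : ℝ, HasDerivAt (fun s => lambdaU μ X I₁ I₂ x s) c y ∧
          0 ≤ c ∧ c ≤ (I₂.card : ℝ)) ∧
    (∀ x₁ x₂ : ℝ, 0 ≤ x₁ → x₁ ≤ x₂ →
      ∀ᵐ y ∂(volume.restrict (Set.Ioi (0 : ℝ))),
        DifferentiableAt ℝ (fun s => lambdaU μ X I₁ I₂ x₁ s) y ∧
        DifferentiableAt ℝ (fun s => lambdaU μ X I₁ I₂ x₂ s) y ∧
        deriv (fun s => lambdaU μ X I₁ I₂ x₁ s) y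
          ≤ deriv (fun s => lambdaU μ X I₁ I₂ x₂ s) y) ∧
    (∀ y₁ y₂ : ℝ, 0 ≤ y₁ → y₁ ≤ y₂ →
      ∀ᵐ x ∂(volume.restrict (Set.Ioi (0 : ℝ))),
        DifferentiableAt ℝ (fun s => lambdaU μ X I₁ I₂ s y₁) x ∧
        DifferentiableAt ℝ (fun s => lambdaU μ X I₁ I₂ s y₂) x ∧
        deriv (fun s => lambdaU μ X I₁ I₂ s y₁) x
          ≤ deriv (fun s => lambdaU μ X I₁ I₂ s y₂) x) := by
  have hswap : ∀ x, (fun s => lambdaU μ X I₁ I₂ x s) = fun s => lambdaU μ X I₂ I₁ s x :=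
    fun x => funext (lambdaU_comm μ X I₁ I₂ x)
  refine ⟨fun y _ => hX.ae_hasDerivAt_lambdaU_fst I₁ I₂ y, fun x _ => ?_,
    fun x₁ x₂ _ hx => ?_, fun y₁ y₂ _ hy => hX.ae_deriv_lambdaU_fst_le I₁ I₂ hy⟩
  · rw [hswap]
    exact hX.ae_hasDerivAt_lambdaU_fst I₂ I₁ x
  · rw [hswap, hswap]
    exact hX.ae_deriv_lambdaU_fst_le I₂ I₁ hx

/-- (i) For each `y ≥ 0`, `∂Λ_U/∂x(·,y)` exists for (Lebesgue-) almost
all `x > 0` and lies in `[0, |I₁|]`; (ii) symmetrically in `y` with bound `|I₂|`;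
(iii) the functions `x ↦ ∂Λ_U/∂y(x,y)` and `y ↦ ∂Λ_U/∂x(x,y)` are defined and
non-decreasing almost everywhere on `[0,∞)`. -/
theorem statement7 {Ω : Type*} [MeasurableSpace Ω] (μ : Measure Ω) [IsProbabilityMeasure μ]
    {d : ℕ} (X : Fin d → Ω → ℝ) (hX : IsMEVFrechet μ X)
    (I₁ I₂ : Finset (Fin d)) (h1 : I₁.Nonempty) (h2 : I₂.Nonempty) (hdisj : Disjoint I₁ I₂) :
    (∀ y : ℝ, 0 ≤ y →
      ∀ᵐ x ∂(volume.restrict (Set.Ioi (0 : ℝ))),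
        ∃ c : ℝ, HasDerivAt (fun s => lambdaU μ X I₁ I₂ s y) c x ∧
          0 ≤ c ∧ c ≤ (I₁.card : ℝ)) ∧
    (∀ x : ℝ, 0 ≤ x →
      ∀ᵐ y ∂(volume.restrict (Set.Ioi (0 : ℝ))),
        ∃ c : ℝ, HasDerivAt (fun s => lambdaU μ X I₁ I₂ x s) c y ∧
          0 ≤ c ∧ c ≤ (I₂.card : ℝ)) ∧
    (∀ x₁ x₂ : ℝ, 0 ≤ x₁ → x₁ ≤ x₂ →
      ∀ᵐ y ∂(volume.restrict (Set.Ioi (0 : ℝ))),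
        DifferentiableAt ℝ (fun s => lambdaU μ X I₁ I₂ x₁ s) y ∧
        DifferentiableAt ℝ (fun s => lambdaU μ X I₁ I₂ x₂ s) y ∧
        deriv (fun s => lambdaU μ X I₁ I₂ x₁ s) y
          ≤ deriv (fun s => lambdaU μ X I₁ I₂ x₂ s) y) ∧
    (∀ y₁ y₂ : ℝ, 0 ≤ y₁ → y₁ ≤ y₂ →
      ∀ᵐ x ∂(volume.restrict (Set.Ioi (0 : ℝ))),
        DifferentiableAt ℝ (fun s => lambdaU μ X I₁ I₂ s y₁) x ∧
        DifferentiableAt ℝ (fun s => lambdaU μ X I₁ I₂ s y₂) x ∧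
        deriv (fun s => lambdaU μ X I₁ I₂ s y₁) x
          ≤ deriv (fun s => lambdaU μ X I₁ I₂ s y₂) x) :=
  statement7_general μ X hX I₁ I₂
end
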